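/- arXiv:2310.15627 — 4 statements merged into one kernel-verified Lean document; each statement's English description precedes it below -/
import Mathlib

section
/- Let d ≥ 1, v̂ ∈ ℝ^d, and γ > 0 with Σ_{i=1}^d |v̂_i| > γ. Then there exists a unique κ > 0 such that Σ_{i=1}^d max(|v̂_i| − κ, 0) = γ, and the vector v* ∈ ℝ^d defined entrywise by v*_i = sgn(v̂_i)·max(|v̂_i| − κ, 0) is the unique minimizer of (1/2)‖v̂ − v‖₂² over the ℓ1 ball {v ∈ ℝ^d : ‖v‖₁ ≤ γ}. -/
/-!
The map `κ ↦ ∑ i, max (|x i| - κ) 0` is continuous, equals `‖x‖₁ > γ` at `0` and `0` at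
`κ = ‖x‖₁`, and is strictly decreasing wherever it is positive; the intermediate value theorem
gives `κ`, strict monotonicity its uniqueness.

For optimality, the residual `u = x - p` of the soft-thresholded vector `p` satisfies
`|u i| ≤ κ` and `u i * p i = κ * |p i|`, i.e. `u` is `κ` times a subgradient of `‖·‖₁` at `p`.
Hence `⟪u, p - v⟫ ≥ κ (‖p‖₁ - ‖v‖₁) ≥ 0` for every `v` in the ball, and expanding
`‖x - v‖² = ‖x - p‖² + 2 ⟪u, p - v⟫ + ‖p - v‖²` gives strict optimality of `p`.
-/

open Finset

noncomputable def softThreshold (κ a : ℝ) : ℝ := Real.sign a * max (|a| - κ) 0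

section softThreshold

variable {κ a : ℝ}

theorem softThreshold_of_abs_le (h : |a| ≤ κ) : softThreshold κ a = 0 := by
  simp [softThreshold, max_eq_right (sub_nonpos.mpr h)]

theorem softThreshold_of_lt (hκ : 0 ≤ κ) (h : κ < a) : softThreshold κ a = a - κ := by
  have ha : 0 < a := hκ.trans_lt h
  rw [softThreshold, Real.sign_of_pos ha, abs_of_pos ha, max_eq_left (by linarith), one_mul]

theorem softThreshold_of_lt_neg (hκ : 0 ≤ κ) (h : a < -κ) : softThreshold κ a = a + κ := by
  have ha : a < 0 := h.trans_le (neg_nonpos.mpr hκ)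
  rw [softThreshold, Real.sign_of_neg ha, abs_of_neg ha, max_eq_left (by linarith)]
  ring

theorem abs_softThreshold (hκ : 0 ≤ κ) : |softThreshold κ a| = max (|a| - κ) 0 := by
  rcases le_or_gt |a| κ with h | h
  · rw [softThreshold_of_abs_le h, abs_zero, max_eq_right (sub_nonpos.mpr h)]
  rw [max_eq_left (sub_nonneg.mpr h.le)]
  rcases lt_abs.mp h with h | h
  · rw [softThreshold_of_lt hκ h, abs_of_pos (by linarith), abs_of_pos (by linarith)]
  · rw [softThreshold_of_lt_neg hκ (by linarith), abs_of_neg (by linarith),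
      abs_of_neg (by linarith)]
    ring

theorem abs_sub_softThreshold_le (hκ : 0 ≤ κ) : |a - softThreshold κ a| ≤ κ := by
  rcases le_or_gt |a| κ with h | h
  · rwa [softThreshold_of_abs_le h, sub_zero]
  rcases lt_abs.mp h with h | h
  · rw [softThreshold_of_lt hκ h, sub_sub_cancel, abs_of_nonneg hκ]
  · rw [softThreshold_of_lt_neg hκ (by linarith), sub_add_cancel_left, abs_neg, abs_of_nonneg hκ]

theorem sub_softThreshold_mul_self (hκ : 0 ≤ κ) :
    (a - softThreshold κ a) * softThreshold κ a = κ * |softThreshold κ a| := by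
  rcases le_or_gt |a| κ with h | h
  · simp [softThreshold_of_abs_le h]
  rcases lt_abs.mp h with h | h
  · rw [softThreshold_of_lt hκ h, abs_of_pos (by linarith)]
    ring
  · rw [softThreshold_of_lt_neg hκ (by linarith), abs_of_neg (by linarith)]
    ring

end softThreshold

def softThresholdL1 {ι : Type*} [Fintype ι] (x : ι → ℝ) (κ : ℝ) : ℝ :=
  ∑ i, max (|x i| - κ) 0

section softThresholdL1

variable {ι : Type*} [Fintype ι] (x : ι → ℝ)

theorem continuous_softThresholdL1 : Continuous (softThresholdL1 x) :=
  continuous_finsetSum _ fun _ _ => (continuous_const.sub continuous_id).max continuous_const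

theorem softThresholdL1_zero : softThresholdL1 x 0 = ∑ i, |x i| := by
  simp [softThresholdL1]

theorem softThresholdL1_sum_abs : softThresholdL1 x (∑ i, |x i|) = 0 :=
  sum_eq_zero fun _ hi => max_eq_right <| sub_nonpos.mpr <|
    single_le_sum (f := fun j => |x j|) (fun _ _ => abs_nonneg _) hi

theorem softThresholdL1_lt_of_lt {a b : ℝ} (hab : a < b) (ha : 0 < softThresholdL1 x a) :
    softThresholdL1 x b < softThresholdL1 x a := by
  obtain ⟨i, -, hi⟩ := exists_lt_of_sum_lt (s := univ) (f := fun _ => (0 : ℝ))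
    (g := fun i => max (|x i| - a) 0) (by rwa [sum_const_zero])
  have hai : a < |x i| := by simpa using hi
  refine sum_lt_sum (fun j _ => max_le_max (by linarith) le_rfl) ⟨i, mem_univ i, ?_⟩
  rw [max_eq_left (by linarith : 0 ≤ |x i| - a)]
  exact max_lt (by linarith) (by linarith)

theorem existsUnique_softThresholdL1_eq {γ : ℝ} (hγ : 0 < γ) (hlt : γ < ∑ i, |x i|) :
    ∃! κ, 0 < κ ∧ softThresholdL1 x κ = γ := by
  obtain ⟨κ, hκ, hκγ⟩ := intermediate_value_Icc' (sum_nonneg fun i _ => abs_nonneg (x i))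
    (continuous_softThresholdL1 x).continuousOn
    (show γ ∈ Set.Icc _ _ by
      rw [softThresholdL1_sum_abs, softThresholdL1_zero]
      exact ⟨hγ.le, hlt.le⟩)
  have hκ0 : κ ≠ 0 := by
    rintro rfl
    rw [softThresholdL1_zero] at hκγ
    exact hlt.ne' hκγ
  refine ⟨κ, ⟨lt_of_le_of_ne hκ.1 (Ne.symm hκ0), hκγ⟩, fun μ ⟨_, hμγ⟩ => ?_⟩
  rcases lt_trichotomy μ κ with h | h | h
  · exact absurd hκγ ((softThresholdL1_lt_of_lt x h (hμγ ▸ hγ)).trans_eq hμγ).ne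
  · exact h
  · exact absurd hμγ ((softThresholdL1_lt_of_lt x h (hκγ ▸ hγ)).trans_eq hκγ).ne

theorem sum_abs_softThreshold {κ : ℝ} (hκ : 0 ≤ κ) :
    ∑ i, |softThreshold κ (x i)| = softThresholdL1 x κ :=
  sum_congr rfl fun _ _ => abs_softThreshold hκ

end softThresholdL1

section projection

variable {ι : Type*} [Fintype ι]

theorem sum_sq_sub_lt_of_sum_mul_sub_nonneg {x p v : ι → ℝ}
    (hobtuse : 0 ≤ ∑ i, (x i - p i) * (p i - v i)) (hne : v ≠ p) :
    ∑ i, (x i - p i) ^ 2 < ∑ i, (x i - v i) ^ 2 := by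
  obtain ⟨j, hj⟩ := Function.ne_iff.mp hne
  have hdist : 0 < ∑ i, (p i - v i) ^ 2 :=
    sum_pos' (fun _ _ => sq_nonneg _) ⟨j, mem_univ j, by positivity [sub_ne_zero.mpr hj.symm]⟩
  have hexpand : ∑ i, (x i - v i) ^ 2 = ∑ i, (x i - p i) ^ 2
      + 2 * ∑ i, (x i - p i) * (p i - v i) + ∑ i, (p i - v i) ^ 2 := by
    rw [mul_sum, ← sum_add_distrib, ← sum_add_distrib]
    exact sum_congr rfl fun _ _ => by ring
  linarith

theorem sum_mul_sub_softThreshold_nonneg (x v : ι → ℝ) {κ : ℝ} (hκ : 0 ≤ κ)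
    (hv : ∑ i, |v i| ≤ ∑ i, |softThreshold κ (x i)|) :
    0 ≤ ∑ i, (x i - softThreshold κ (x i)) * (softThreshold κ (x i) - v i) := by
  simp only [mul_sub, sum_sub_distrib, sub_softThreshold_mul_self hκ, ← mul_sum, sub_nonneg]
  calc ∑ i, (x i - softThreshold κ (x i)) * v i
      ≤ ∑ i, κ * |v i| := sum_le_sum fun i _ => calc
        _ ≤ |x i - softThreshold κ (x i)| * |v i| := abs_mul _ (v i) ▸ le_abs_self _
        _ ≤ κ * |v i| := by gcongr; exact abs_sub_softThreshold_le hκ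
    _ = κ * ∑ i, |v i| := (mul_sum _ _ _).symm
    _ ≤ κ * ∑ i, |softThreshold κ (x i)| := mul_le_mul_of_nonneg_left hv hκ

end projection

theorem stmt8_general {d : ℕ} (vhat : Fin d → ℝ) (γ : ℝ) (hγ : 0 < γ)
    (hbig : γ < ∑ i, |vhat i|) :
    (∃! κ : ℝ, 0 < κ ∧ (∑ i, max (|vhat i| - κ) 0) = γ) ∧
    (∀ κ : ℝ, 0 < κ → (∑ i, max (|vhat i| - κ) 0) = γ →
      ∀ vstar : Fin d → ℝ,
        (∀ i, vstar i = Real.sign (vhat i) * max (|vhat i| - κ) 0) →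
        (∑ i, |vstar i|) ≤ γ ∧
        ∀ v : Fin d → ℝ, (∑ i, |v i|) ≤ γ → v ≠ vstar →
          (1 / 2) * (∑ i, (vhat i - vstar i) ^ 2) <
            (1 / 2) * (∑ i, (vhat i - v i) ^ 2)) := by
  refine ⟨existsUnique_softThresholdL1_eq vhat hγ hbig, fun κ hκ hsum vstar hvstar => ?_⟩
  obtain rfl : vstar = fun i => softThreshold κ (vhat i) := funext hvstar
  have hnorm : ∑ i, |softThreshold κ (vhat i)| = γ :=
    (sum_abs_softThreshold vhat hκ.le).trans hsum
  refine ⟨hnorm.le, fun v hv hne => ?_⟩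
  have := sum_sq_sub_lt_of_sum_mul_sub_nonneg
    (sum_mul_sub_softThreshold_nonneg vhat v hκ.le (hv.trans hnorm.ge)) hne
  linarith

/-- soft-thresholding characterization of the projection onto
the ℓ1 ball (basis of Algorithm 2 / Duchi et al. 2008). -/
theorem stmt8 {d : ℕ} (hd : 1 ≤ d) (vhat : Fin d → ℝ) (γ : ℝ) (hγ : 0 < γ)
    (hbig : γ < ∑ i, |vhat i|) :
    (∃! κ : ℝ, 0 < κ ∧ (∑ i, max (|vhat i| - κ) 0) = γ) ∧
    (∀ κ : ℝ, 0 < κ → (∑ i, max (|vhat i| - κ) 0) = γ →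
      ∀ vstar : Fin d → ℝ,
        (∀ i, vstar i = Real.sign (vhat i) * max (|vhat i| - κ) 0) →
        (∑ i, |vstar i|) ≤ γ ∧
        ∀ v : Fin d → ℝ, (∑ i, |v i|) ≤ γ → v ≠ vstar →
          (1 / 2) * (∑ i, (vhat i - vstar i) ^ 2) <
            (1 / 2) * (∑ i, (vhat i - v i) ^ 2)) :=
  stmt8_general vhat γ hγ hbig
end

section
/- Fix p ≥ 1 and s > 0, and define F : ℝ^{p×p} → ℝ by F(V) = −log det(sI − V∘V) + p·log s. Let W ∈ ℝ^{p×p} with det(sI − W∘W) > 0. Then F is differentiable at W, and its derivative is the linear map V ↦ ⟨2((sI − W∘W)^{-1})^T ∘ W, V⟩, i.e., the gradient of F at W with respect to the Frobenius inner product is ∇F(W) = 2((sI − W∘W)^{-1})^T ∘ W. -/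
/-!
Jacobi's formula `d(det)_A V = tr (adj A * V)` gives `d(log det)_A V = tr (A⁻¹ * V)` wherever
`det A ≠ 0`. The Hadamard square has derivative `V ↦ 2 • W ⊙ V` at `W`, so by the chain rule the
derivative of `F` at `W` is `V ↦ 2 tr ((sI - W ⊙ W)⁻¹ * (W ⊙ V))`, and
`tr (B * (C ⊙ V)) = ⟨Bᵀ ⊙ C, V⟩`.
-/

open Matrix

attribute [local instance] Matrix.normedAddCommGroup Matrix.normedSpace

namespace Matrix

theorem det_updateRow_eq_sum_mul_adjugate {n R : Type*} [Fintype n] [DecidableEq n] [CommRing R]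
    (A : Matrix n n R) (i : n) (b : n → R) :
    (A.updateRow i b).det = ∑ j, b j * adjugate A j i := by
  rw [← cramer_transpose_apply, cramer_eq_adjugate_mulVec, ← adjugate_transpose]
  simp only [mulVec, dotProduct, transpose_apply, mul_comm]

theorem trace_mul_hadamard {n R : Type*} [Fintype n] [CommSemiring R] (B C V : Matrix n n R) :
    trace (B * (C ⊙ V)) = ∑ j, ∑ k, (Bᵀ ⊙ C) j k * V j k := by
  simp only [trace, diag_apply, mul_apply, hadamard_apply, transpose_apply, mul_assoc]
  exact Finset.sum_comm

variable {𝕜 m n : Type*} [NontriviallyNormedField 𝕜] [CompleteSpace 𝕜] [Fintype m] [Fintype n]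

noncomputable def traceMulCLM [DecidableEq n] (B : Matrix n n 𝕜) : Matrix n n 𝕜 →L[𝕜] 𝕜 :=
  LinearMap.toContinuousLinearMap (traceLinearMap n 𝕜 𝕜 ∘ₗ LinearMap.mulLeft 𝕜 B)

noncomputable def hadamardCLM (A : Matrix m n 𝕜) : Matrix m n 𝕜 →L[𝕜] Matrix m n 𝕜 :=
  LinearMap.toContinuousLinearMap
    { toFun := (A ⊙ ·)
      map_add' := fun B C => hadamard_add A B C
      map_smul' := fun c B => hadamard_smul (A := A) (B := B) c }

theorem hasFDerivAt_det [DecidableEq n] (A : Matrix n n 𝕜) :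
    HasFDerivAt det (traceMulCLM (adjugate A)) A := by
  let D : ContinuousMultilinearMap 𝕜 (fun _ : n => n → 𝕜) 𝕜 :=
    { (detRowAlternating : (n → 𝕜) [⋀^n]→ₗ[𝕜] 𝕜).toMultilinearMap with
      cont := continuous_id.matrix_det }
  refine (D.hasFDerivAt A).congr_fderiv (ContinuousLinearMap.ext fun (V : Matrix n n 𝕜) => ?_)
  refine (D.linearDeriv_apply A V).trans ?_
  change ∑ i, (A.updateRow i (V i)).det = trace (adjugate A * V)
  simp only [det_updateRow_eq_sum_mul_adjugate, trace, diag_apply, mul_apply, mul_comm (V _ _)]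
  exact Finset.sum_comm

theorem hasFDerivAt_hadamard_self (W : Matrix m n 𝕜) :
    HasFDerivAt (fun V => V ⊙ V) ((2 : 𝕜) • hadamardCLM W) W := by
  refine hasFDerivAt_pi'' fun i => hasFDerivAt_pi'' fun j => ?_
  let e : Matrix m n 𝕜 →L[𝕜] 𝕜 := (ContinuousLinearMap.proj j).comp
    (ContinuousLinearMap.proj i : Matrix m n 𝕜 →L[𝕜] n → 𝕜)
  refine (e.hasFDerivAt.mul e.hasFDerivAt).congr_fderiv (ContinuousLinearMap.ext fun V => ?_)
  change W i j * V i j + W i j * V i j = 2 * (W i j * V i j)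
  ring

theorem hasFDerivAt_log_det [DecidableEq n] {A : Matrix n n ℝ} (hA : A.det ≠ 0) :
    HasFDerivAt (fun M => Real.log M.det) (traceMulCLM A⁻¹) A := by
  refine ((Real.hasDerivAt_log hA).comp_hasFDerivAt A (hasFDerivAt_det A)).congr_fderiv
    (ContinuousLinearMap.ext fun V => ?_)
  change A.det⁻¹ * trace (adjugate A * V) = trace (A⁻¹ * V)
  rw [inv_def, Ring.inverse_eq_inv', smul_mul, trace_smul, smul_eq_mul]

end Matrix

theorem stmt9_general {p : ℕ} (s : ℝ)
    (F : Matrix (Fin p) (Fin p) ℝ → ℝ)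
    (hF : ∀ V : Matrix (Fin p) (Fin p) ℝ,
      F V = -Real.log ((s • (1 : Matrix (Fin p) (Fin p) ℝ) - Matrix.hadamard V V).det) +
        p * Real.log s)
    (W : Matrix (Fin p) (Fin p) ℝ)
    (hdet : 0 < (s • (1 : Matrix (Fin p) (Fin p) ℝ) - Matrix.hadamard W W).det) :
    ∃ L : Matrix (Fin p) (Fin p) ℝ →L[ℝ] ℝ,
      HasFDerivAt F L W ∧
      ∀ V : Matrix (Fin p) (Fin p) ℝ,
        L V = ∑ j, ∑ k,
          ((2 : ℝ) • Matrix.hadamard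
            ((s • (1 : Matrix (Fin p) (Fin p) ℝ) - Matrix.hadamard W W)⁻¹)ᵀ W) j k * V j k := by
  set A := s • (1 : Matrix (Fin p) (Fin p) ℝ) - W ⊙ W
  have hA : HasFDerivAt (fun V => s • (1 : Matrix (Fin p) (Fin p) ℝ) - V ⊙ V)
      (-((2 : ℝ) • hadamardCLM W)) W :=
    (hasFDerivAt_hadamard_self W).const_sub _
  refine ⟨-((traceMulCLM A⁻¹).comp (-((2 : ℝ) • hadamardCLM W))), ?_, fun V => ?_⟩
  · rw [show F = _ from funext hF]
    exact ((hasFDerivAt_log_det hdet.ne').comp W hA).neg.add_const _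
  · change -trace (A⁻¹ * -((2 : ℝ) • (W ⊙ V))) = _
    simp only [mul_neg, trace_neg, neg_neg, mul_smul_comm, trace_smul, trace_mul_hadamard,
      Finset.mul_sum, Matrix.smul_apply, smul_eq_mul, mul_assoc]

/-- gradient of the DAGMA acyclicity function
h_s(W) = −log det(sI − W∘W) + p log s. -/
theorem stmt9 {p : ℕ} (hp : 1 ≤ p) (s : ℝ) (hs : 0 < s)
    (F : Matrix (Fin p) (Fin p) ℝ → ℝ)
    (hF : ∀ V : Matrix (Fin p) (Fin p) ℝ,
      F V = -Real.log ((s • (1 : Matrix (Fin p) (Fin p) ℝ) - Matrix.hadamard V V).det) +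
        p * Real.log s)
    (W : Matrix (Fin p) (Fin p) ℝ)
    (hdet : 0 < (s • (1 : Matrix (Fin p) (Fin p) ℝ) - Matrix.hadamard W W).det) :
    ∃ L : Matrix (Fin p) (Fin p) ℝ →L[ℝ] ℝ,
      HasFDerivAt F L W ∧
      ∀ V : Matrix (Fin p) (Fin p) ℝ,
        L V = ∑ j, ∑ k,
          ((2 : ℝ) • Matrix.hadamard
            ((s • (1 : Matrix (Fin p) (Fin p) ℝ) - Matrix.hadamard W W)⁻¹)ᵀ W) j k * V j k :=
  stmt9_general s F hF W hdet
end

section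
/- Let p ≥ 1, W̃ ∈ ℝ^{p×p} with |w̃_{jk}| ≤ 1 for all j, k, and let s ≥ 1 + max(‖W̃‖₁, ‖W̃‖_∞). Then for all W₁, W₂ ∈ ℝ^{p×p} with |entries of W_i| ≤ |corresponding entries of W̃| (i = 1, 2), the matrices sI − W₁∘W₁ and sI − W₂∘W₂ are invertible and ‖(sI − W₁∘W₁)^{-1} − (sI − W₂∘W₂)^{-1}‖_F ≤ 2p·‖W₁ − W₂‖_F. -/
open Matrix

noncomputable def frobNorm {p : ℕ} (W : Matrix (Fin p) (Fin p) ℝ) : ℝ :=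
  Real.sqrt (∑ j, ∑ k, (W j k) ^ 2)

noncomputable def colSumNorm {p : ℕ} (W : Matrix (Fin p) (Fin p) ℝ) : ℝ :=
  ⨆ k, ∑ j, |W j k|

noncomputable def rowSumNorm {p : ℕ} (W : Matrix (Fin p) (Fin p) ℝ) : ℝ :=
  ⨆ j, ∑ k, |W j k|

noncomputable def gradG {p : ℕ} (μ s : ℝ) (Wt W : Matrix (Fin p) (Fin p) ℝ) :
    Matrix (Fin p) (Fin p) ℝ :=
  (μ / 2) • (W - Wt) +
    (2 : ℝ) • Matrix.hadamard ((s • (1 : Matrix (Fin p) (Fin p) ℝ) - Matrix.hadamard W W)⁻¹)ᵀ W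

noncomputable def fObj {p : ℕ} (μ s : ℝ) (Wt W : Matrix (Fin p) (Fin p) ℝ) : ℝ :=
  μ / 2 * frobNorm (Wt - W) ^ 2 +
    (-Real.log ((s • (1 : Matrix (Fin p) (Fin p) ℝ) - Matrix.hadamard W W).det) +
      p * Real.log s)

noncomputable def specRad {p : ℕ} (M : Matrix (Fin p) (Fin p) ℝ) : ENNReal :=
  spectralRadius ℂ (M.map (algebraMap ℝ ℂ))

noncomputable def specNorm {p : ℕ} (M : Matrix (Fin p) (Fin p) ℝ) : ℝ :=
  ‖LinearMap.toContinuousLinearMap (Matrix.toEuclideanLin M)‖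

/-!
Every entry of `W` lies in `[-1, 1]` and is dominated by the corresponding entry of `W̃`, so the
rows of `W ⊙ W` have absolute sums at most `rowSumNorm W̃ ≤ s - 1`. Hence
`‖(s • 1 - W ⊙ W) v‖∞ ≥ ‖v‖∞` for every vector `v`: the matrix `s • 1 - W ⊙ W` is invertible and
its inverse has `∞`-operator norm at most `1`, so Frobenius norm at most `√p`. With
`Aᵢ = s • 1 - Wᵢ ⊙ Wᵢ` we have `A₁⁻¹ - A₂⁻¹ = A₁⁻¹ (W₁ ⊙ W₁ - W₂ ⊙ W₂) A₂⁻¹`, and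
`|a² - b²| ≤ 2 |a - b|` on `[-1, 1]` bounds the middle factor by `2 ‖W₁ - W₂‖_F`.
-/

section LinftyOpNorm

open scoped Matrix.Norms.Operator

variable {m n : Type*} [Fintype m] [Fintype n]

theorem Matrix.sum_abs_le_linfty_opNorm (A : Matrix m n ℝ) (i : m) : ∑ j, |A i j| ≤ ‖A‖ := by
  rw [linfty_opNorm_def]
  calc ∑ j, |A i j| = ((∑ j, ‖A i j‖₊ : NNReal) : ℝ) := by simp
    _ ≤ _ := NNReal.coe_le_coe.mpr (Finset.le_sup (f := fun i => ∑ j, ‖A i j‖₊) (Finset.mem_univ i))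

theorem Matrix.linfty_opNorm_le_of_abs_le {A B : Matrix m n ℝ} (h : ∀ i j, |A i j| ≤ |B i j|) :
    ‖A‖ ≤ ‖B‖ := by
  rw [linfty_opNorm_def, linfty_opNorm_def, NNReal.coe_le_coe]
  gcongr with i _ j _
  exact h i j

theorem Matrix.linfty_opNorm_hadamard_self_le {W Wt : Matrix m n ℝ}
    (hW : ∀ i j, |W i j| ≤ |Wt i j|) (hWt : ∀ i j, |Wt i j| ≤ 1) : ‖W ⊙ W‖ ≤ ‖Wt‖ :=
  linfty_opNorm_le_of_abs_le fun i j => by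
    rw [hadamard_apply, abs_mul]
    nlinarith [hW i j, hWt i j, abs_nonneg (W i j)]

theorem linfty_opNorm_eq_rowSumNorm {p : ℕ} (W : Matrix (Fin p) (Fin p) ℝ) :
    ‖W‖ = rowSumNorm W := by
  have hbdd : BddAbove (Set.range fun i => ∑ j, |W i j|) := (Set.finite_range _).bddAbove
  refine le_antisymm ?_ (Real.iSup_le (sum_abs_le_linfty_opNorm W) (norm_nonneg W))
  have h0 : 0 ≤ rowSumNorm W := Real.iSup_nonneg fun i => by positivity
  rw [linfty_opNorm_def, ← NNReal.coe_mk _ h0, NNReal.coe_le_coe]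
  refine Finset.sup_le fun i _ => ?_
  rw [← NNReal.coe_le_coe]
  simpa [rowSumNorm] using le_ciSup hbdd i

end LinftyOpNorm

section SmulOneSub

open scoped Matrix.Norms.Operator

variable {n : Type*} [Fintype n] [DecidableEq n] {M : Matrix n n ℝ} {s : ℝ}

theorem Matrix.norm_le_norm_smul_one_sub_mulVec (hM : ‖M‖ + 1 ≤ s) (v : n → ℝ) :
    ‖v‖ ≤ ‖(s • 1 - M) *ᵥ v‖ := by
  have hs : 0 ≤ s := by linarith [norm_nonneg M]
  have hMv : ‖M *ᵥ v‖ ≤ (s - 1) * ‖v‖ :=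
    (linfty_opNorm_mulVec M v).trans (by gcongr; linarith)
  calc ‖v‖ = s * ‖v‖ - (s - 1) * ‖v‖ := by ring
    _ ≤ ‖s • v‖ - ‖M *ᵥ v‖ := by rw [norm_smul, Real.norm_of_nonneg hs]; linarith
    _ ≤ ‖s • v - M *ᵥ v‖ := norm_sub_norm_le _ _
    _ = ‖(s • 1 - M) *ᵥ v‖ := by rw [sub_mulVec, smul_mulVec, one_mulVec]

theorem Matrix.isUnit_smul_one_sub (hM : ‖M‖ + 1 ≤ s) : IsUnit (s • 1 - M) := by
  refine mulVec_injective_iff_isUnit.mp fun v w hvw => sub_eq_zero.mp (norm_le_zero_iff.mp ?_)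
  simpa [mulVec_sub, hvw] using norm_le_norm_smul_one_sub_mulVec hM (v - w)

theorem Matrix.linfty_opNorm_inv_smul_one_sub_le_one (hM : ‖M‖ + 1 ≤ s) :
    ‖(s • 1 - M)⁻¹‖ ≤ 1 := by
  have hdet := (isUnit_iff_isUnit_det _).mp (isUnit_smul_one_sub hM)
  rw [linfty_opNorm_eq_opNorm]
  refine ContinuousLinearMap.opNorm_le_bound _ zero_le_one fun v => ?_
  calc ‖(s • 1 - M)⁻¹ *ᵥ v‖ ≤ ‖(s • 1 - M) *ᵥ ((s • 1 - M)⁻¹ *ᵥ v)‖ :=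
        norm_le_norm_smul_one_sub_mulVec hM _
    _ = 1 * ‖v‖ := by rw [mulVec_mulVec, mul_nonsing_inv _ hdet, one_mulVec, one_mul]

end SmulOneSub

section FrobNorm

variable {p : ℕ}

theorem frobNorm_nonneg (A : Matrix (Fin p) (Fin p) ℝ) : 0 ≤ frobNorm A :=
  Real.sqrt_nonneg _

section

open scoped Matrix.Norms.Frobenius

theorem frobNorm_eq_frobenius_norm (A : Matrix (Fin p) (Fin p) ℝ) : frobNorm A = ‖A‖ := by
  simp [frobNorm, frobenius_norm_def, Real.sqrt_eq_rpow]

theorem frobNorm_mul_le (A B : Matrix (Fin p) (Fin p) ℝ) :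
    frobNorm (A * B) ≤ frobNorm A * frobNorm B := by
  simpa only [frobNorm_eq_frobenius_norm] using frobenius_norm_mul A B

end

theorem frobNorm_le_mul_of_abs_le_mul {X Y : Matrix (Fin p) (Fin p) ℝ} {c : ℝ} (hc : 0 ≤ c)
    (h : ∀ j k, |X j k| ≤ c * |Y j k|) : frobNorm X ≤ c * frobNorm Y := by
  rw [frobNorm, frobNorm, ← Real.sqrt_sq hc, ← Real.sqrt_mul (sq_nonneg c), Finset.mul_sum]
  refine Real.sqrt_le_sqrt (Finset.sum_le_sum fun j _ => ?_)
  rw [Finset.mul_sum]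
  refine Finset.sum_le_sum fun k _ => ?_
  rw [← sq_abs (X j k), ← sq_abs (Y j k), ← mul_pow]
  exact pow_le_pow_left₀ (abs_nonneg _) (h j k) 2

open scoped Matrix.Norms.Operator in
theorem frobNorm_le_sqrt_mul_linfty_opNorm (X : Matrix (Fin p) (Fin p) ℝ) :
    frobNorm X ≤ √p * ‖X‖ := by
  have hrow (j : Fin p) : ∑ k, X j k ^ 2 ≤ ‖X‖ ^ 2 :=
    calc ∑ k, X j k ^ 2 = ∑ k, |X j k| ^ 2 := by simp only [sq_abs]
      _ ≤ (∑ k, |X j k|) ^ 2 := Finset.sum_sq_le_sq_sum_of_nonneg fun k _ => abs_nonneg _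
      _ ≤ ‖X‖ ^ 2 := by gcongr; exact sum_abs_le_linfty_opNorm X j
  calc frobNorm X ≤ √(∑ _j : Fin p, ‖X‖ ^ 2) :=
        Real.sqrt_le_sqrt (Finset.sum_le_sum fun j _ => hrow j)
    _ = √p * ‖X‖ := by simp [Real.sqrt_mul (Nat.cast_nonneg p)]

theorem abs_mul_self_sub_mul_self_le {a b : ℝ} (ha : |a| ≤ 1) (hb : |b| ≤ 1) :
    |a * a - b * b| ≤ 2 * |a - b| := by
  rw [show a * a - b * b = (a + b) * (a - b) by ring, abs_mul]
  gcongr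
  linarith [abs_add_le a b]

theorem frobNorm_hadamard_self_sub_le {W₁ W₂ : Matrix (Fin p) (Fin p) ℝ}
    (h₁ : ∀ j k, |W₁ j k| ≤ 1) (h₂ : ∀ j k, |W₂ j k| ≤ 1) :
    frobNorm (W₁ ⊙ W₁ - W₂ ⊙ W₂) ≤ 2 * frobNorm (W₁ - W₂) :=
  frobNorm_le_mul_of_abs_le_mul zero_le_two fun j k =>
    abs_mul_self_sub_mul_self_le (h₁ j k) (h₂ j k)

end FrobNorm

theorem stmt12_general {p : ℕ} (Wt : Matrix (Fin p) (Fin p) ℝ)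
    (hWt : ∀ j k, |Wt j k| ≤ 1) (s : ℝ)
    (hs : 1 + max (colSumNorm Wt) (rowSumNorm Wt) ≤ s) :
    ∀ W₁ W₂ : Matrix (Fin p) (Fin p) ℝ,
      (∀ j k, |W₁ j k| ≤ |Wt j k|) → (∀ j k, |W₂ j k| ≤ |Wt j k|) →
      IsUnit (s • (1 : Matrix (Fin p) (Fin p) ℝ) - Matrix.hadamard W₁ W₁) ∧
      IsUnit (s • (1 : Matrix (Fin p) (Fin p) ℝ) - Matrix.hadamard W₂ W₂) ∧
      frobNorm ((s • (1 : Matrix (Fin p) (Fin p) ℝ) - Matrix.hadamard W₁ W₁)⁻¹ -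
          (s • (1 : Matrix (Fin p) (Fin p) ℝ) - Matrix.hadamard W₂ W₂)⁻¹) ≤
        2 * p * frobNorm (W₁ - W₂) := by
  open scoped Matrix.Norms.Operator in
  intro W₁ W₂ hW₁ hW₂
  have hM {W : Matrix (Fin p) (Fin p) ℝ} (hW : ∀ j k, |W j k| ≤ |Wt j k|) : ‖W ⊙ W‖ + 1 ≤ s := by
    linarith [linfty_opNorm_hadamard_self_le hW hWt, linfty_opNorm_eq_rowSumNorm Wt,
      le_max_right (colSumNorm Wt) (rowSumNorm Wt)]
  have hinv {W : Matrix (Fin p) (Fin p) ℝ} (hW : ∀ j k, |W j k| ≤ |Wt j k|) :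
      frobNorm (s • 1 - W ⊙ W)⁻¹ ≤ √p :=
    (frobNorm_le_sqrt_mul_linfty_opNorm _).trans
      (mul_le_of_le_one_right (Real.sqrt_nonneg _) (linfty_opNorm_inv_smul_one_sub_le_one (hM hW)))
  have hU₁ := isUnit_smul_one_sub (hM hW₁)
  have hU₂ := isUnit_smul_one_sub (hM hW₂)
  refine ⟨hU₁, hU₂, ?_⟩
  rw [inv_sub_inv (iff_of_true hU₁ hU₂), sub_sub_sub_cancel_left]
  have hdiff := frobNorm_hadamard_self_sub_le (fun j k => (hW₁ j k).trans (hWt j k))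
    (fun j k => (hW₂ j k).trans (hWt j k))
  calc _ ≤ frobNorm (s • 1 - W₁ ⊙ W₁)⁻¹ * frobNorm (W₁ ⊙ W₁ - W₂ ⊙ W₂) *
        frobNorm (s • 1 - W₂ ⊙ W₂)⁻¹ :=
        (frobNorm_mul_le _ _).trans (by gcongr; exacts [frobNorm_nonneg _, frobNorm_mul_le _ _])
    _ ≤ √p * (2 * frobNorm (W₁ - W₂)) * √p :=
        mul_le_mul (mul_le_mul (hinv hW₁) hdiff (frobNorm_nonneg _) (Real.sqrt_nonneg _))
          (hinv hW₂) (frobNorm_nonneg _) (by have := frobNorm_nonneg (W₁ - W₂); positivity)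
    _ = 2 * p * frobNorm (W₁ - W₂) := by
        rw [mul_comm, ← mul_assoc, Real.mul_self_sqrt (Nat.cast_nonneg p)]; ring

/-- Lipschitz bound on the map W ↦ (sI − W∘W)⁻¹ over the box. -/
theorem stmt12 {p : ℕ} (hp : 1 ≤ p) (Wt : Matrix (Fin p) (Fin p) ℝ)
    (hWt : ∀ j k, |Wt j k| ≤ 1) (s : ℝ)
    (hs : 1 + max (colSumNorm Wt) (rowSumNorm Wt) ≤ s) :
    ∀ W₁ W₂ : Matrix (Fin p) (Fin p) ℝ,
      (∀ j k, |W₁ j k| ≤ |Wt j k|) → (∀ j k, |W₂ j k| ≤ |Wt j k|) →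
      IsUnit (s • (1 : Matrix (Fin p) (Fin p) ℝ) - Matrix.hadamard W₁ W₁) ∧
      IsUnit (s • (1 : Matrix (Fin p) (Fin p) ℝ) - Matrix.hadamard W₂ W₂) ∧
      frobNorm ((s • (1 : Matrix (Fin p) (Fin p) ℝ) - Matrix.hadamard W₁ W₁)⁻¹ -
          (s • (1 : Matrix (Fin p) (Fin p) ℝ) - Matrix.hadamard W₂ W₂)⁻¹) ≤
        2 * p * frobNorm (W₁ - W₂) :=
  stmt12_general Wt hWt s hs
end

section
/- Let M ∈ ℝ^{p×p} be entrywise nonnegative with ρ(M) < s for some s > 0. Then 0 < det(sI − M) ≤ s^p, with equality det(sI − M) = s^p if and only if M is nilpotent. Equivalently, h := −log det(sI − M) + p·log s satisfies h ≥ 0, with h = 0 if and only if M is nilpotent. -/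
open Matrix

/-!
Over `ℂ`, `det(sI - M) = ∏ (s - z)` over the eigenvalues `z` of `M`, all of modulus `< s`, and the
logarithmic series gives `s - z = s · exp (-∑_{k ≥ 1} z^k / (k s^k))`. Summing over the eigenvalues,
`det(sI - M) = s^p · exp (-L)` with `L = ∑_{k ≥ 1} tr(M^k) / (k s^k)`, so that `h = L`. Every
`tr(M^k)` is nonnegative because `M` is, hence `L ≥ 0`, and `L = 0` iff `tr(M^k) = 0` for all
`k ≥ 1`. In characteristic zero this forces all eigenvalues to vanish (a Vandermonde argument on
the power sums), i.e. `M` is nilpotent.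
-/

open Polynomial Module

lemma spectrum.norm_lt_of_spectralRadius_lt {𝕜 A : Type*} [NormedField 𝕜] [Ring A] [Algebra 𝕜 A]
    {a : A} {s : ℝ} (h : spectralRadius 𝕜 a < ENNReal.ofReal s) {z : 𝕜} (hz : z ∈ spectrum 𝕜 a) :
    ‖z‖ < s := by
  have := (le_iSup₂ (f := fun k (_ : k ∈ spectrum 𝕜 a) => (‖k‖₊ : ENNReal)) z hz).trans_lt h
  rw [← enorm_eq_nnnorm, ← ofReal_norm, ENNReal.ofReal_lt_ofReal_iff'] at this
  exact this.1

lemma Multiset.eq_zero_of_forall_sum_map_pow_eq_zero {K : Type*} [Field K] [CharZero K]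
    {S : Multiset K} (hS : ∀ k ≠ 0, (S.map (· ^ k)).sum = 0) {z : K} (hz : z ∈ S) : z = 0 := by
  classical
  let e := S.toFinset.equivFin.symm
  have hinj : Function.Injective fun j => (e j : K) := Subtype.val_injective.comp e.injective
  have hvan : (fun j => (S.count (e j : K) : K) * e j) = 0 := by
    refine Matrix.eq_zero_of_forall_pow_sum_mul_pow_eq_zero hinj fun i => ?_
    have := hS (i + 1) (Nat.succ_ne_zero i)
    rw [Finset.sum_multiset_map_count, ← Finset.sum_coe_sort, ← e.sum_comp] at this
    simpa [mul_assoc, pow_succ'] using this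
  have := congrFun hvan (e.symm ⟨z, mem_toFinset.mpr hz⟩)
  simpa [count_ne_zero.mpr hz] using this

-- The `k = 0` term of the series is `card R / 0 = 0`.
lemma Multiset.exists_hasSum_and_prod_map_sub_eq (R : Multiset ℂ) {s : ℂ}
    (hR : ∀ z ∈ R, ‖z‖ < ‖s‖) :
    ∃ c, HasSum (fun k : ℕ => (R.map (· ^ k)).sum / (k * s ^ k)) c ∧
      (R.map (s - ·)).prod = s ^ card R * Complex.exp (-c) := by
  induction R using Multiset.induction_on with
  | empty => exact ⟨0, by simp, by simp⟩
  | cons a R ih =>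
    obtain ⟨c, hc, hprod⟩ := ih fun z hz => hR z (mem_cons_of_mem hz)
    have ha := hR a (mem_cons_self a R)
    have hs : s ≠ 0 := norm_pos_iff.mp ((norm_nonneg a).trans_lt ha)
    have hdiv : ‖a / s‖ < 1 := by rwa [norm_div, div_lt_one (norm_pos_iff.mpr hs)]
    have hsub : 1 - a / s ≠ 0 := fun h => by
      rw [← sub_eq_zero.mp h, norm_one] at hdiv
      exact hdiv.false
    refine ⟨-Complex.log (1 - a / s) + c, ?_, ?_⟩
    · convert (Complex.hasSum_taylorSeries_neg_log hdiv).add hc using 1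
      ext k
      simp only [map_cons, sum_cons, add_div, div_pow, div_div, mul_comm]
    · rw [map_cons, prod_cons, hprod, card_cons, neg_add, neg_neg, Complex.exp_add,
        Complex.exp_log hsub, pow_succ]
      field_simp

namespace LinearMap

lemma trace_pow_eq_of_isNilpotent_sub_algebraMap {R M : Type*} [CommRing R] [IsReduced R]
    [AddCommGroup M] [Module R M] [Module.Free R M] [Module.Finite R M]
    {f : Module.End R M} (μ : R) (hf : IsNilpotent (f - algebraMap R _ μ)) (k : ℕ) :
    trace R M (f ^ k) = μ ^ k * finrank R M := by
  induction k with
  | zero => simp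
  | succ k ih =>
    rw [pow_succ, Module.End.mul_eq_comp,
      trace_comp_eq_mul_of_commute_of_isNilpotent μ ((Commute.refl f).pow_left k) hf, ih,
      pow_succ]
    ring

variable {K V : Type*} [Field K] [IsAlgClosed K] [AddCommGroup V] [Module K V]
  [FiniteDimensional K V]

lemma trace_pow_eq_sum_roots_charpoly_pow (f : Module.End K V) (k : ℕ) :
    trace K V (f ^ k) = (f.charpoly.roots.map (· ^ k)).sum := by
  classical
  have hint := DirectSum.isInternal_submodule_of_iSupIndep_of_iSup_eq_top
    f.independent_maxGenEigenspace f.iSup_maxGenEigenspace_eq_top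
  have hfin := WellFoundedGT.finite_ne_bot_of_iSupIndep f.independent_maxGenEigenspace
  have hmaps μ := f.mapsTo_maxGenEigenspace_of_comm ((Commute.refl f).pow_right k) μ
  have hsupp : hfin.toFinset = f.charpoly.roots.toFinset := by
    ext μ
    simp [← Submodule.finrank_eq_zero (R := K) (M := V), finrank_maxGenEigenspace_eq,
      rootMultiplicity_eq_zero_iff, f.charpoly_monic.ne_zero]
  rw [trace_eq_sum_trace_restrict' hint hfin hmaps, Finset.sum_multiset_map_count, hsupp]
  refine Finset.sum_congr rfl fun μ _ => ?_
  have hf : Set.MapsTo f (f.maxGenEigenspace μ) (f.maxGenEigenspace μ) :=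
    f.mapsTo_maxGenEigenspace_of_comm rfl μ
  have hnil : IsNilpotent (f.restrict hf - algebraMap K _ μ) :=
    f.isNilpotent_restrict_maxGenEigenspace_sub_algebraMap μ
  rw [← Module.End.pow_restrict k hf, trace_pow_eq_of_isNilpotent_sub_algebraMap μ hnil k,
    finrank_maxGenEigenspace_eq, count_roots, nsmul_eq_mul, mul_comm]

lemma isNilpotent_iff_forall_trace_pow_eq_zero [CharZero K] (f : Module.End K V) :
    IsNilpotent f ↔ ∀ k ≠ 0, trace K V (f ^ k) = 0 := by
  refine ⟨fun hf k hk => (isNilpotent_trace_of_isNilpotent (hf.pow_of_pos hk)).eq_zero,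
    fun h => ?_⟩
  have hroots : f.charpoly.roots = Multiset.replicate (finrank K V) 0 := by
    rw [Multiset.eq_replicate, ← f.charpoly_natDegree,
      ← splits_iff_card_roots.mp (IsAlgClosed.splits _)]
    refine ⟨rfl, fun z hz => Multiset.eq_zero_of_forall_sum_map_pow_eq_zero (fun k hk => ?_) hz⟩
    rw [← trace_pow_eq_sum_roots_charpoly_pow, h k hk]
  rw [isNilpotent_iff_charpoly, (IsAlgClosed.splits _).eq_prod_roots_of_monic f.charpoly_monic,
    hroots]
  simp

end LinearMap

namespace Matrix

variable {n : Type*} [Fintype n] [DecidableEq n]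

lemma trace_pow_eq_sum_roots_charpoly_pow {K : Type*} [Field K] [IsAlgClosed K]
    (A : Matrix n n K) (k : ℕ) : (A ^ k).trace = (A.charpoly.roots.map (· ^ k)).sum := by
  rw [← trace_toLin'_eq, toLin'_pow, LinearMap.trace_pow_eq_sum_roots_charpoly_pow, charpoly_toLin']

lemma isNilpotent_iff_forall_trace_pow_eq_zero {K : Type*} [Field K] [CharZero K]
    (A : Matrix n n K) : IsNilpotent A ↔ ∀ k ≠ 0, (A ^ k).trace = 0 := by
  let φ := algebraMap K (AlgebraicClosure K)
  rw [← IsNilpotent.map_iff (f := φ.mapMatrix) (map_injective φ.injective),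
    ← IsNilpotent.map_iff (f := toLinAlgEquiv') toLinAlgEquiv'.injective,
    LinearMap.isNilpotent_iff_forall_trace_pow_eq_zero]
  refine forall₂_congr fun k _ => ?_
  rw [← map_pow, ← map_pow]
  change LinearMap.trace _ _ (toLin' _) = 0 ↔ _
  rw [trace_toLin'_eq, RingHom.mapMatrix_apply, ← AddMonoidHom.map_trace, map_eq_zero]

lemma exists_hasSum_trace_pow_and_det_eq (M : Matrix n n ℝ) {s : ℝ}
    (hM : ∀ z ∈ spectrum ℂ (M.map (algebraMap ℝ ℂ)), ‖z‖ < s) :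
    ∃ L, HasSum (fun k : ℕ => (M ^ k).trace / (k * s ^ k)) L ∧
      (s • 1 - M).det = s ^ Fintype.card n * Real.exp (-L) := by
  set A := M.map (algebraMap ℝ ℂ)
  have hsplit := IsAlgClosed.splits A.charpoly
  have hroots : ∀ z ∈ A.charpoly.roots, ‖z‖ < ‖(s : ℂ)‖ := fun z hz =>
    (hM z (mem_spectrum_iff_isRoot_charpoly.mpr (isRoot_of_mem_roots hz))).trans_le
      (by simpa using le_abs_self s)
  obtain ⟨c, hc, hprod⟩ := A.charpoly.roots.exists_hasSum_and_prod_map_sub_eq hroots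
  have hcℝ : HasSum (fun k : ℕ => (((M ^ k).trace / (k * s ^ k) : ℝ) : ℂ)) c := by
    convert hc using 2 with k
    rw [← trace_pow_eq_sum_roots_charpoly_pow, ← Matrix.map_pow, ← AddMonoidHom.map_trace]
    simp
  have hL := (Complex.summable_ofReal.mp hcℝ.summable).hasSum
  have hcL : _ = c := (Complex.hasSum_ofReal.mpr hL).unique hcℝ
  refine ⟨_, hL, Complex.ofReal_injective ?_⟩
  have hcard : Multiset.card A.charpoly.roots = Fintype.card n :=
    (splits_iff_card_roots.mp hsplit).trans A.charpoly_natDegree_eq_dim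
  have hdet : (((s • 1 - M).det : ℝ) : ℂ) = eval (s : ℂ) A.charpoly := by
    rw [eval_charpoly, ← Complex.coe_algebraMap, RingHom.map_det]
    congr 1
    ext i j
    by_cases h : i = j <;> simp [A, h]
  rw [hdet, hsplit.eval_eq_prod_roots_of_monic A.charpoly_monic, hprod, hcard, ← hcL]
  simp

lemma trace_pow_div_nonneg {M : Matrix n n ℝ} (hM : ∀ i j, 0 ≤ M i j) {s : ℝ} (hs : 0 ≤ s)
    (k : ℕ) : 0 ≤ (M ^ k).trace / (k * s ^ k) :=
  div_nonneg (Finset.sum_nonneg fun i _ => pow_apply_nonneg hM k i i) (by positivity)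

lemma isNilpotent_iff_hasSum_trace_pow_div_eq_zero {M : Matrix n n ℝ} (hM : ∀ i j, 0 ≤ M i j)
    {s : ℝ} (hs : 0 < s) {L : ℝ} (hL : HasSum (fun k : ℕ => (M ^ k).trace / (k * s ^ k)) L) :
    IsNilpotent M ↔ L = 0 := by
  have hterms :
      (∀ k ≠ 0, (M ^ k).trace = 0) ↔ (fun k : ℕ => (M ^ k).trace / (k * s ^ k)) = 0 := by
    simp [funext_iff, or_comm, or_iff_not_imp_left, hs.ne']
  rw [isNilpotent_iff_forall_trace_pow_eq_zero, hterms,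
    ← hasSum_zero_iff_of_nonneg (L := .unconditional ℕ) (trace_pow_div_nonneg hM hs.le)]
  exact ⟨hL.unique, fun h => h ▸ hL⟩

end Matrix

/-- the DAGMA log-det characterization of acyclicity:
0 < det(sI − M) ≤ s^p with equality iff M is nilpotent; equivalently
h = −log det(sI − M) + p log s ≥ 0 with h = 0 iff M is nilpotent. -/
theorem stmt15 {p : ℕ} (M : Matrix (Fin p) (Fin p) ℝ)
    (hM : ∀ j k, 0 ≤ M j k) (s : ℝ) (hs : specRad M < ENNReal.ofReal s) :
    (0 < (s • (1 : Matrix (Fin p) (Fin p) ℝ) - M).det ∧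
     (s • (1 : Matrix (Fin p) (Fin p) ℝ) - M).det ≤ s ^ p ∧
     ((s • (1 : Matrix (Fin p) (Fin p) ℝ) - M).det = s ^ p ↔ IsNilpotent M)) ∧
    (0 ≤ -Real.log ((s • (1 : Matrix (Fin p) (Fin p) ℝ) - M).det) + p * Real.log s ∧
     (-Real.log ((s • (1 : Matrix (Fin p) (Fin p) ℝ) - M).det) + p * Real.log s = 0 ↔
       IsNilpotent M)) := by
  have hs0 : 0 < s := ENNReal.ofReal_pos.mp (pos_of_gt hs)
  obtain ⟨L, hL, hdet⟩ :=
    M.exists_hasSum_trace_pow_and_det_eq fun z hz => spectrum.norm_lt_of_spectralRadius_lt hs hz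
  rw [Fintype.card_fin] at hdet
  have hL0 : 0 ≤ L := hL.nonneg (trace_pow_div_nonneg hM hs0.le)
  have hlog : -Real.log (s • 1 - M).det + p * Real.log s = L := by
    rw [hdet, Real.log_mul (by positivity) (by positivity), Real.log_pow, Real.log_exp]
    ring
  rw [hlog, hdet, isNilpotent_iff_hasSum_trace_pow_div_eq_zero hM hs0 hL]
  refine ⟨⟨by positivity, ?_, ?_⟩, hL0, Iff.rfl⟩
  · exact mul_le_of_le_one_right (by positivity) (Real.exp_le_one_iff.mpr (by linarith))
  · rw [mul_eq_left₀ (by positivity), Real.exp_eq_one_iff, neg_eq_zero]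
end
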